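/- Let N ≥ 2 and M ≥ N. For every ε with 0 < ε < 1 there exists a frame Ψ = (ψ_1, …, ψ_M) for ℝ^N (unit-norm vectors spanning ℝ^N) such that inf{‖I_N − Σ_{i=1}^M c_i ψ_i ψ_iᵀ‖₂ : c ∈ ℝ^M, c_i ≥ 0 for all i} = 1 − ε. -/
import Mathlib


/-- The ℓ²→ℓ² operator norm (largest singular value) of a square real matrix. -/
noncomputable def opNorm {N : ℕ} (A : Matrix (Fin N) (Fin N) ℝ) : ℝ :=
  ‖(Matrix.toEuclideanCLM (𝕜 := ℝ) A : EuclideanSpace ℝ (Fin N) →L[ℝ] EuclideanSpace ℝ (Fin N))‖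

/-- `frameOp ψ c = ∑ i, c i • ψ i ψ iᵀ`. -/
noncomputable def frameOp {N M : ℕ} (ψ : Fin M → (Fin N → ℝ)) (c : Fin M → ℝ) :
    Matrix (Fin N) (Fin N) ℝ :=
  ∑ i, c i • Matrix.vecMulVec (ψ i) (ψ i)

lemma clm_apply {N : ℕ} (A : Matrix (Fin N) (Fin N) ℝ) (x : EuclideanSpace ℝ (Fin N)) (i : Fin N) :
    (Matrix.toEuclideanCLM (𝕜 := ℝ) A) x i = ∑ j, A i j * x j := by
  rfl

lemma abs_entry_le_opNorm {N : ℕ} (A : Matrix (Fin N) (Fin N) ℝ) (i j : Fin N) :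
    |A i j| ≤ opNorm A := by
  have h := (Matrix.toEuclideanCLM (𝕜 := ℝ) A).le_opNorm (EuclideanSpace.single j (1:ℝ))
  rw [EuclideanSpace.norm_single, norm_one, mul_one] at h
  set y := (Matrix.toEuclideanCLM (𝕜 := ℝ) A) (EuclideanSpace.single j (1:ℝ))
  have hy : y i = A i j := by
    show ∑ k, A i k * (EuclideanSpace.single j (1:ℝ)) k = A i j
    simp [EuclideanSpace.single_apply]
  have h2 : |y i| ≤ ‖y‖ := by
    have := abs_real_inner_le_norm (EuclideanSpace.single i (1:ℝ)) y
    rw [EuclideanSpace.norm_single, norm_one, one_mul] at this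
    simpa [EuclideanSpace.inner_single_left] using this
  rw [hy] at h2
  exact h2.trans h

lemma opNorm_le_of_bound {N : ℕ} (A : Matrix (Fin N) (Fin N) ℝ) {b : ℝ} (hb : 0 ≤ b)
    (h : ∀ i, ∀ j, |A i j| ≤ if i = j then b else 0) : opNorm A ≤ b := by
  apply ContinuousLinearMap.opNorm_le_bound _ hb
  intro x
  have hx : ∀ i, ((Matrix.toEuclideanCLM (𝕜 := ℝ) A) x) i = A i i * x i := by
    intro i
    rw [clm_apply]
    rw [Finset.sum_eq_single i]
    · intro j _ hj
      have := h i j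
      rw [if_neg (Ne.symm hj)] at this
      have : A i j = 0 := abs_nonpos_iff.mp this
      simp [this]
    · simp
  rw [EuclideanSpace.norm_eq, EuclideanSpace.norm_eq]
  rw [← Real.sqrt_sq hb, ← Real.sqrt_mul (by positivity)]
  apply Real.sqrt_le_sqrt
  rw [Finset.mul_sum]
  apply Finset.sum_le_sum
  intro i _
  rw [hx i]
  have hAi : |A i i| ≤ b := by simpa using h i i
  calc ‖A i i * x i‖ ^ 2 = (A i i)^2 * ‖x i‖^2 := by
        rw [norm_mul, Real.norm_eq_abs (A i i), mul_pow, sq_abs]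
    _ ≤ b^2 * ‖x i‖^2 := by
        apply mul_le_mul_of_nonneg_right _ (by positivity)
        calc (A i i)^2 = |A i i|^2 := (sq_abs _).symm
          _ ≤ b^2 := by apply pow_le_pow_left₀ (abs_nonneg _) hAi 2

lemma sum_ite_two {n : ℕ} (j0 j1 : Fin n) (hne : j0 ≠ j1) (f : Fin n → ℝ)
    (h : ∀ i, i ≠ j0 → i ≠ j1 → f i = 0) : ∑ i, f i = f j0 + f j1 := by
  rw [← Finset.add_sum_erase Finset.univ f (Finset.mem_univ j0)]
  congr 1
  rw [Finset.sum_eq_single j1]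
  · intro i hi hij1; exact h i (Finset.ne_of_mem_erase hi) hij1
  · intro h'; exact absurd (Finset.mem_erase.mpr ⟨hne.symm, Finset.mem_univ _⟩) h'

noncomputable def myPsi (N M : ℕ) (ε : ℝ) : Fin M → Fin N → ℝ := fun i k =>
  if (i:ℕ) = 0 then
    (if (k:ℕ) = 0 then Real.sqrt (ε/2) else if (k:ℕ) = 1 then Real.sqrt (1-ε/2) else 0)
  else if (i:ℕ) = 1 then
    (if (k:ℕ) = 0 then Real.sqrt (ε/2) else if (k:ℕ) = 1 then -Real.sqrt (1-ε/2) else 0)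
  else if (k:ℕ) = min (i:ℕ) (N-1) then 1 else 0

lemma frameOp_apply {N M : ℕ} (ψ : Fin M → (Fin N → ℝ)) (c : Fin M → ℝ) (p q : Fin N) :
    frameOp ψ c p q = ∑ i, c i * (ψ i p * ψ i q) := by
  simp [frameOp, Matrix.sum_apply, Matrix.vecMulVec_apply, mul_assoc]

section entries
variable {N M : ℕ} {ε : ℝ}

lemma myPsi_eval_ge2 (hN : 2 ≤ N) (i : Fin M) (hi : 2 ≤ (i:ℕ)) (k : Fin N) :
    myPsi N M ε i k = if (k:ℕ) = min (i:ℕ) (N-1) then 1 else 0 := by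
  have h0 : (i:ℕ) ≠ 0 := by omega
  have h1 : (i:ℕ) ≠ 1 := by omega
  simp [myPsi, h0, h1]

lemma entry_00 (hN : 2 ≤ N) (hM : N ≤ M) (hε0 : 0 ≤ ε) (c : Fin M → ℝ)
    (p : Fin N) (hp : (p:ℕ) = 0) (j0 j1 : Fin M) (hj0 : (j0:ℕ) = 0) (hj1 : (j1:ℕ) = 1) :
    frameOp (myPsi N M ε) c p p = (c j0 + c j1) * (ε/2) := by
  rw [frameOp_apply]
  rw [sum_ite_two j0 j1 (by rw [Fin.ne_iff_vne, hj0, hj1]; omega)]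
  · have h0 : myPsi N M ε j0 p = Real.sqrt (ε/2) := by simp [myPsi, hj0, hp]
    have h1 : myPsi N M ε j1 p = Real.sqrt (ε/2) := by simp [myPsi, hj1, hp]
    rw [h0, h1, Real.mul_self_sqrt (show (0:ℝ) ≤ ε/2 by linarith)]
    ring
  · intro i hi0 hi1
    have hi2 : 2 ≤ (i:ℕ) := by
      rw [Fin.ne_iff_vne, hj0] at hi0
      rw [Fin.ne_iff_vne, hj1] at hi1
      omega
    have : myPsi N M ε i p = 0 := by
      rw [myPsi_eval_ge2 hN i hi2, if_neg]
      omega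
    simp [this]

lemma entry_11_ge (hN : 2 ≤ N) (hM : N ≤ M) (hε0 : 0 ≤ ε) (hε1 : ε ≤ 1) (c : Fin M → ℝ)
    (hc : ∀ i, 0 ≤ c i)
    (p : Fin N) (hp : (p:ℕ) = 1) (j0 j1 : Fin M) (hj0 : (j0:ℕ) = 0) (hj1 : (j1:ℕ) = 1) :
    (c j0 + c j1) * (1 - ε/2) ≤ frameOp (myPsi N M ε) c p p := by
  rw [frameOp_apply]
  have hne : j0 ≠ j1 := by rw [Fin.ne_iff_vne, hj0, hj1]; omega
  have hsub : ({j0, j1} : Finset (Fin M)) ⊆ Finset.univ := Finset.subset_univ _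
  have h0 : myPsi N M ε j0 p = Real.sqrt (1-ε/2) := by simp [myPsi, hj0, hp]
  have h1 : myPsi N M ε j1 p = -Real.sqrt (1-ε/2) := by simp [myPsi, hj1, hp]
  calc (c j0 + c j1) * (1 - ε/2)
      = ∑ i ∈ ({j0, j1} : Finset (Fin M)), c i * (myPsi N M ε i p * myPsi N M ε i p) := by
        rw [Finset.sum_pair hne, h0, h1, neg_mul_neg, Real.mul_self_sqrt (show (0:ℝ) ≤ 1-ε/2 by linarith)]
        ring
    _ ≤ ∑ i, c i * (myPsi N M ε i p * myPsi N M ε i p) := by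
        apply Finset.sum_le_sum_of_subset_of_nonneg hsub
        intro i _ _
        exact mul_nonneg (hc i) (mul_self_nonneg _)

end entries

lemma myPsi_eval_lt2_zero {N M : ℕ} {ε : ℝ} (i : Fin M) (hi : (i:ℕ) < 2) (k : Fin N)
    (hk : 2 ≤ (k:ℕ)) : myPsi N M ε i k = 0 := by
  have hk0 : ¬(k:ℕ) = 0 := by omega
  have hk1 : ¬(k:ℕ) = 1 := by omega
  rcases (by omega : (i:ℕ) = 0 ∨ (i:ℕ) = 1) with h | h <;> simp [myPsi, h, hk0, hk1]

lemma diag_eq {N M : ℕ} {ε : ℝ} (hN : 2 ≤ N) (hM : N ≤ M) (hε0 : 0 ≤ ε) (hε1 : ε ≤ 1) :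
    (1 : Matrix (Fin N) (Fin N) ℝ) - frameOp (myPsi N M ε) (fun i => if (i:ℕ) < N then 1 else 0)
      = Matrix.diagonal (fun p : Fin N => if (p:ℕ) = 0 then 1-ε else if (p:ℕ) = 1 then ε-1 else 0) := by
  have hNM : 2 ≤ M := le_trans hN hM
  have ha : Real.sqrt (ε/2) * Real.sqrt (ε/2) = ε/2 :=
    Real.mul_self_sqrt (by linarith)
  have hb : Real.sqrt (1-ε/2) * Real.sqrt (1-ε/2) = 1-ε/2 :=
    Real.mul_self_sqrt (by linarith)
  set c : Fin M → ℝ := fun i => if (i:ℕ) < N then 1 else 0 with hcdef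
  have hcv : ∀ i : Fin M, c i = if (i:ℕ) < N then 1 else 0 := fun _ => rfl
  ext p q
  rw [Matrix.sub_apply, frameOp_apply]
  by_cases hp2 : (p:ℕ) < 2
  · by_cases hq2 : (q:ℕ) < 2
    · -- both p, q in {0,1}
      rw [sum_ite_two (⟨0, by omega⟩ : Fin M) (⟨1, by omega⟩ : Fin M)
        (by rw [Fin.ne_iff_vne]; simp)]
      · have hc0 : c ⟨0, by omega⟩ = 1 := by rw [hcv]; simp; omega
        have hc1 : c ⟨1, by omega⟩ = 1 := by rw [hcv]; simp; omega
        rw [hc0, hc1, one_mul, one_mul]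
        by_cases hp0 : (p:ℕ) = 0 <;> by_cases hq0 : (q:ℕ) = 0
        · have hpq : p = q := Fin.ext (by omega)
          subst hpq
          rw [Matrix.one_apply_eq, Matrix.diagonal_apply_eq]
          have h0 : myPsi N M ε ⟨0, by omega⟩ p = Real.sqrt (ε/2) := by simp [myPsi, hp0]
          have h1 : myPsi N M ε ⟨1, by omega⟩ p = Real.sqrt (ε/2) := by simp [myPsi, hp0]
          rw [h0, h1, ha, if_pos hp0]
          ring
        · have hq1 : (q:ℕ) = 1 := by omega
          have hpq : p ≠ q := by rw [Fin.ne_iff_vne]; omega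
          rw [Matrix.one_apply_ne hpq, Matrix.diagonal_apply_ne _ hpq]
          have h0p : myPsi N M ε ⟨0, by omega⟩ p = Real.sqrt (ε/2) := by simp [myPsi, hp0]
          have h1p : myPsi N M ε ⟨1, by omega⟩ p = Real.sqrt (ε/2) := by simp [myPsi, hp0]
          have h0q : myPsi N M ε ⟨0, by omega⟩ q = Real.sqrt (1-ε/2) := by
            simp [myPsi, hq1]
          have h1q : myPsi N M ε ⟨1, by omega⟩ q = -Real.sqrt (1-ε/2) := by
            simp [myPsi, hq1]
          rw [h0p, h1p, h0q, h1q]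
          ring
        · have hp1 : (p:ℕ) = 1 := by omega
          have hpq : p ≠ q := by rw [Fin.ne_iff_vne]; omega
          rw [Matrix.one_apply_ne hpq, Matrix.diagonal_apply_ne _ hpq]
          have h0p : myPsi N M ε ⟨0, by omega⟩ p = Real.sqrt (1-ε/2) := by simp [myPsi, hp1]
          have h1p : myPsi N M ε ⟨1, by omega⟩ p = -Real.sqrt (1-ε/2) := by simp [myPsi, hp1]
          have h0q : myPsi N M ε ⟨0, by omega⟩ q = Real.sqrt (ε/2) := by simp [myPsi, hq0]
          have h1q : myPsi N M ε ⟨1, by omega⟩ q = Real.sqrt (ε/2) := by simp [myPsi, hq0]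
          rw [h0p, h1p, h0q, h1q]
          ring
        · have hp1 : (p:ℕ) = 1 := by omega
          have hpq : p = q := Fin.ext (by omega)
          subst hpq
          rw [Matrix.one_apply_eq, Matrix.diagonal_apply_eq]
          have h0 : myPsi N M ε ⟨0, by omega⟩ p = Real.sqrt (1-ε/2) := by simp [myPsi, hp1]
          have h1 : myPsi N M ε ⟨1, by omega⟩ p = -Real.sqrt (1-ε/2) := by simp [myPsi, hp1]
          rw [h0, h1, neg_mul_neg, hb, if_neg (by omega), if_pos hp1]
          ring
      · intro i hi0 hi1
        rw [Fin.ne_iff_vne] at hi0 hi1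
        simp only [Fin.val_mk] at hi0 hi1
        by_cases hcN : (i:ℕ) < N
        · have : myPsi N M ε i p = 0 := by
            rw [myPsi_eval_ge2 hN i (by omega), if_neg]
            omega
          simp [this]
        · rw [hcv, if_neg hcN, zero_mul]
    · -- q ≥ 2: all terms vanish, p ≠ q
      have hpq : p ≠ q := by rw [Fin.ne_iff_vne]; omega
      rw [Matrix.one_apply_ne hpq, Matrix.diagonal_apply_ne _ hpq]
      rw [Finset.sum_eq_zero, sub_zero]
      intro i _
      by_cases hi2 : (i:ℕ) < 2
      · rw [myPsi_eval_lt2_zero i hi2 q (by omega)]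
        simp
      · by_cases hcN : (i:ℕ) < N
        · have : myPsi N M ε i p = 0 := by
            rw [myPsi_eval_ge2 hN i (by omega), if_neg]
            omega
          simp [this]
        · rw [hcv, if_neg hcN, zero_mul]
  · by_cases hq2 : (q:ℕ) < 2
    · -- p ≥ 2, q ≤ 1
      have hpq : p ≠ q := by rw [Fin.ne_iff_vne]; omega
      rw [Matrix.one_apply_ne hpq, Matrix.diagonal_apply_ne _ hpq]
      rw [Finset.sum_eq_zero, sub_zero]
      intro i _
      by_cases hi2 : (i:ℕ) < 2
      · rw [myPsi_eval_lt2_zero i hi2 p (by omega)]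
        simp
      · by_cases hcN : (i:ℕ) < N
        · have : myPsi N M ε i q = 0 := by
            rw [myPsi_eval_ge2 hN i (by omega), if_neg]
            omega
          simp [this]
        · rw [hcv, if_neg hcN, zero_mul]
    · -- both ≥ 2
      by_cases hpq : p = q
      · subst hpq
        rw [Matrix.one_apply_eq, Matrix.diagonal_apply_eq]
        rw [Finset.sum_eq_single (⟨(p:ℕ), lt_of_lt_of_le p.isLt hM⟩ : Fin M)]
        · have h1 : myPsi N M ε ⟨(p:ℕ), lt_of_lt_of_le p.isLt hM⟩ p = 1 := by
            rw [myPsi_eval_ge2 hN _ (by simpa using (by omega : 2 ≤ (p:ℕ))), if_pos]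
            simp only [Fin.val_mk]
            have := p.isLt
            omega
          have h2 : c ⟨(p:ℕ), lt_of_lt_of_le p.isLt hM⟩ = 1 := by
            rw [hcv, if_pos]
            simpa using p.isLt
          rw [h1, h2]
          rw [if_neg (by omega : ¬(p:ℕ) = 0), if_neg (by omega : ¬(p:ℕ) = 1)]
          ring
        · intro i _ hip
          by_cases hi2 : (i:ℕ) < 2
          · rw [myPsi_eval_lt2_zero i hi2 p (by omega)]
            simp
          · by_cases hcN : (i:ℕ) < N
            · have : myPsi N M ε i p = 0 := by
                rw [myPsi_eval_ge2 hN i (by omega), if_neg]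
                rw [Fin.ne_iff_vne] at hip
                simp only [Fin.val_mk] at hip
                omega
              simp [this]
            · rw [hcv, if_neg hcN, zero_mul]
        · intro h
          exact absurd (Finset.mem_univ _) h
      · rw [Matrix.one_apply_ne hpq, Matrix.diagonal_apply_ne _ hpq]
        rw [Finset.sum_eq_zero, sub_zero]
        intro i _
        by_cases hi2 : (i:ℕ) < 2
        · rw [myPsi_eval_lt2_zero i hi2 p (by omega)]
          simp
        · by_cases hcN : (i:ℕ) < N
          · rcases eq_or_ne ((p:ℕ)) (min (i:ℕ) (N-1)) with h | h
            · have : myPsi N M ε i q = 0 := by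
                rw [myPsi_eval_ge2 hN i (by omega), if_neg]
                have hne : (p:ℕ) ≠ (q:ℕ) := fun hh => hpq (Fin.ext hh)
                omega
              simp [this]
            · have : myPsi N M ε i p = 0 := by
                rw [myPsi_eval_ge2 hN i (by omega), if_neg h]
              simp [this]
          · rw [hcv, if_neg hcN, zero_mul]

lemma myPsi_unit {N M : ℕ} {ε : ℝ} (hN : 2 ≤ N) (hε0 : 0 ≤ ε) (hε1 : ε ≤ 1) (i : Fin M) :
    ∑ k, (myPsi N M ε i k) ^ 2 = 1 := by
  have ha : Real.sqrt (ε/2) ^ 2 = ε/2 := Real.sq_sqrt (by linarith)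
  have hb : Real.sqrt (1-ε/2) ^ 2 = 1-ε/2 := Real.sq_sqrt (by linarith)
  by_cases h0 : (i:ℕ) = 0
  · rw [sum_ite_two (⟨0, by omega⟩ : Fin N) (⟨1, by omega⟩ : Fin N)
      (by rw [Fin.ne_iff_vne]; simp)]
    · have e0 : myPsi N M ε i ⟨0, by omega⟩ = Real.sqrt (ε/2) := by simp [myPsi, h0]
      have e1 : myPsi N M ε i ⟨1, by omega⟩ = Real.sqrt (1-ε/2) := by simp [myPsi, h0]
      rw [e0, e1, ha, hb]
      ring
    · intro k hk0 hk1
      rw [Fin.ne_iff_vne] at hk0 hk1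
      simp only [Fin.val_mk] at hk0 hk1
      rw [myPsi_eval_lt2_zero i (by omega) k (by omega)]
      simp
  · by_cases h1 : (i:ℕ) = 1
    · rw [sum_ite_two (⟨0, by omega⟩ : Fin N) (⟨1, by omega⟩ : Fin N)
        (by rw [Fin.ne_iff_vne]; simp)]
      · have e0 : myPsi N M ε i ⟨0, by omega⟩ = Real.sqrt (ε/2) := by simp [myPsi, h0, h1]
        have e1 : myPsi N M ε i ⟨1, by omega⟩ = -Real.sqrt (1-ε/2) := by simp [myPsi, h0, h1]
        rw [e0, e1, ha, neg_pow, hb]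
        ring
      · intro k hk0 hk1
        rw [Fin.ne_iff_vne] at hk0 hk1
        simp only [Fin.val_mk] at hk0 hk1
        rw [myPsi_eval_lt2_zero i (by omega) k (by omega)]
        simp
    · have hi2 : 2 ≤ (i:ℕ) := by omega
      rw [Finset.sum_eq_single (⟨min (i:ℕ) (N-1), by omega⟩ : Fin N)]
      · rw [myPsi_eval_ge2 hN i hi2, if_pos rfl]
        norm_num
      · intro k _ hk
        rw [myPsi_eval_ge2 hN i hi2, if_neg]
        · simp
        · rw [Fin.ne_iff_vne] at hk
          simpa using hk
      · intro h
        exact absurd (Finset.mem_univ _) h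

lemma myPsi_span {N M : ℕ} {ε : ℝ} (hN : 2 ≤ N) (hM : N ≤ M) (hε0 : 0 < ε) (hε1 : ε < 1) :
    Submodule.span ℝ (Set.range (myPsi N M ε)) = ⊤ := by
  have hNM : 2 ≤ M := le_trans hN hM
  have ha0 : (0:ℝ) < Real.sqrt (ε/2) := Real.sqrt_pos.mpr (by linarith)
  have hb0 : (0:ℝ) < Real.sqrt (1-ε/2) := Real.sqrt_pos.mpr (by linarith)
  apply eq_top_iff.mpr
  rw [← (Pi.basisFun ℝ (Fin N)).span_eq]
  apply Submodule.span_le.mpr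
  rintro _ ⟨k, rfl⟩
  rw [Pi.basisFun_apply]
  by_cases hk0 : (k:ℕ) = 0
  · have key : Pi.single k (1:ℝ) = (2*Real.sqrt (ε/2))⁻¹ •
        (myPsi N M ε ⟨0, by omega⟩ + myPsi N M ε ⟨1, by omega⟩) := by
      funext k'
      simp only [Pi.smul_apply, Pi.add_apply, smul_eq_mul, Pi.single_apply]
      by_cases h0' : (k':ℕ) = 0
      · have e0 : myPsi N M ε (⟨0, by omega⟩ : Fin M) k' = Real.sqrt (ε/2) := by
          simp [myPsi, h0']
        have e1 : myPsi N M ε (⟨1, by omega⟩ : Fin M) k' = Real.sqrt (ε/2) := by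
          simp [myPsi, h0']
        rw [e0, e1, if_pos (Fin.ext (by omega) : k' = k)]
        field_simp
        ring
      · rw [if_neg (by rw [Fin.ne_iff_vne]; omega : k' ≠ k)]
        by_cases h1' : (k':ℕ) = 1
        · have e0 : myPsi N M ε (⟨0, by omega⟩ : Fin M) k' = Real.sqrt (1-ε/2) := by
            simp [myPsi, h0', h1']
          have e1 : myPsi N M ε (⟨1, by omega⟩ : Fin M) k' = -Real.sqrt (1-ε/2) := by
            simp [myPsi, h0', h1']
          rw [e0, e1]
          ring
        · rw [myPsi_eval_lt2_zero _ (by norm_num) k' (by omega),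
            myPsi_eval_lt2_zero _ (by norm_num) k' (by omega)]
          ring
    rw [key]
    exact Submodule.smul_mem _ _ (Submodule.add_mem _
      (Submodule.subset_span ⟨_, rfl⟩) (Submodule.subset_span ⟨_, rfl⟩))
  · by_cases hk1 : (k:ℕ) = 1
    · have key : Pi.single k (1:ℝ) = (2*Real.sqrt (1-ε/2))⁻¹ •
          (myPsi N M ε ⟨0, by omega⟩ - myPsi N M ε ⟨1, by omega⟩) := by
        funext k'
        simp only [Pi.smul_apply, Pi.sub_apply, smul_eq_mul, Pi.single_apply]
        by_cases h0' : (k':ℕ) = 0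
        · have e0 : myPsi N M ε (⟨0, by omega⟩ : Fin M) k' = Real.sqrt (ε/2) := by
            simp [myPsi, h0']
          have e1 : myPsi N M ε (⟨1, by omega⟩ : Fin M) k' = Real.sqrt (ε/2) := by
            simp [myPsi, h0']
          rw [e0, e1, if_neg (by rw [Fin.ne_iff_vne]; omega : k' ≠ k)]
          ring
        · by_cases h1' : (k':ℕ) = 1
          · have e0 : myPsi N M ε (⟨0, by omega⟩ : Fin M) k' = Real.sqrt (1-ε/2) := by
              simp [myPsi, h0', h1']
            have e1 : myPsi N M ε (⟨1, by omega⟩ : Fin M) k' = -Real.sqrt (1-ε/2) := by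
              simp [myPsi, h0', h1']
            rw [e0, e1, if_pos (Fin.ext (by omega) : k' = k),
              show Real.sqrt (1-ε/2) - -Real.sqrt (1-ε/2) = 2*Real.sqrt (1-ε/2) by ring,
              inv_mul_cancel₀ (by positivity)]
          · rw [if_neg (by rw [Fin.ne_iff_vne]; omega : k' ≠ k),
              myPsi_eval_lt2_zero _ (by norm_num) k' (by omega),
              myPsi_eval_lt2_zero _ (by norm_num) k' (by omega)]
            ring
      rw [key]
      exact Submodule.smul_mem _ _ (Submodule.sub_mem _
        (Submodule.subset_span ⟨_, rfl⟩) (Submodule.subset_span ⟨_, rfl⟩))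
    · have hk2 : 2 ≤ (k:ℕ) := by omega
      have key : Pi.single k (1:ℝ) = myPsi N M ε ⟨(k:ℕ), lt_of_lt_of_le k.isLt hM⟩ := by
        funext k'
        rw [myPsi_eval_ge2 hN _ (by simpa using hk2), Pi.single_apply]
        have hmin : min ((⟨(k:ℕ), lt_of_lt_of_le k.isLt hM⟩ : Fin M) : ℕ) (N-1) = (k:ℕ) := by
          simp only [Fin.val_mk]
          have := k.isLt
          omega
        rw [hmin]
        by_cases h : k' = k
        · rw [if_pos h, if_pos (by rw [h])]
        · rw [if_neg h, if_neg (fun hh => h (Fin.ext hh))]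
      rw [key]
      exact Submodule.subset_span ⟨_, rfl⟩

lemma opNorm_diag {N : ℕ} {ε : ℝ} (hN : 2 ≤ N) (hε0 : 0 < ε) (hε1 : ε < 1) :
    opNorm (Matrix.diagonal
      (fun p : Fin N => if (p:ℕ) = 0 then 1-ε else if (p:ℕ) = 1 then ε-1 else 0)) = 1 - ε := by
  set d : Fin N → ℝ := fun p => if (p:ℕ) = 0 then 1-ε else if (p:ℕ) = 1 then ε-1 else 0 with hd
  apply le_antisymm
  · apply opNorm_le_of_bound _ (by linarith : (0:ℝ) ≤ 1-ε)
    intro p q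
    by_cases hpq : p = q
    · subst hpq
      rw [Matrix.diagonal_apply_eq, if_pos rfl]
      show |d p| ≤ 1-ε
      rw [hd]
      simp only
      by_cases h0 : (p:ℕ) = 0
      · rw [if_pos h0, abs_of_nonneg (by linarith)]
      · by_cases h1 : (p:ℕ) = 1
        · rw [if_neg h0, if_pos h1, abs_of_nonpos (by linarith)]
          linarith
        · rw [if_neg h0, if_neg h1, abs_zero]
          linarith
    · rw [Matrix.diagonal_apply_ne _ hpq, if_neg hpq, abs_zero]
  · have h := abs_entry_le_opNorm (Matrix.diagonal d) ⟨0, by omega⟩ ⟨0, by omega⟩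
    rw [Matrix.diagonal_apply_eq] at h
    have : d ⟨0, by omega⟩ = 1-ε := by rw [hd]; simp
    rw [this, abs_of_nonneg (by linarith)] at h
    exact h

/-- for `N ≥ 2`, `M ≥ N` and any `0 < ε < 1` there is a unit-norm frame
`Ψ = (ψ_1, …, ψ_M)` for `ℝ^N` with `inf {‖I - ∑ c_i ψ_i ψ_iᵀ‖₂ : c ≥ 0} = 1 - ε`. -/
theorem stmt_10 (N M : ℕ) (hN : 2 ≤ N) (hM : N ≤ M) (ε : ℝ) (hε0 : 0 < ε) (hε1 : ε < 1) :
    ∃ ψ : Fin M → (Fin N → ℝ),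
      (∀ i, ∑ k, (ψ i k) ^ 2 = 1) ∧
      Submodule.span ℝ (Set.range ψ) = ⊤ ∧
      sInf {r : ℝ | ∃ c : Fin M → ℝ, (∀ i, 0 ≤ c i) ∧ r = opNorm (1 - frameOp ψ c)}
        = 1 - ε := by
  have hNM : 2 ≤ M := le_trans hN hM
  refine ⟨myPsi N M ε, fun i => myPsi_unit hN hε0.le hε1.le i, myPsi_span hN hM hε0 hε1, ?_⟩
  have hmem : (1-ε) ∈ {r : ℝ | ∃ c : Fin M → ℝ, (∀ i, 0 ≤ c i) ∧
      r = opNorm (1 - frameOp (myPsi N M ε) c)} := by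
    refine ⟨fun i => if (i:ℕ) < N then 1 else 0, fun i => by positivity, ?_⟩
    rw [diag_eq hN hM hε0.le hε1.le, opNorm_diag hN hε0 hε1]
  have hlb : ∀ r ∈ {r : ℝ | ∃ c : Fin M → ℝ, (∀ i, 0 ≤ c i) ∧
      r = opNorm (1 - frameOp (myPsi N M ε) c)}, 1-ε ≤ r := by
    rintro r ⟨c, hc, rfl⟩
    set A := (1 : Matrix (Fin N) (Fin N) ℝ) - frameOp (myPsi N M ε) c with hA
    have h00 : A ⟨0, by omega⟩ ⟨0, by omega⟩
        = 1 - (c ⟨0, by omega⟩ + c ⟨1, by omega⟩) * (ε/2) := by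
      rw [hA, Matrix.sub_apply, Matrix.one_apply_eq,
        entry_00 hN hM hε0.le c _ rfl ⟨0, by omega⟩ ⟨1, by omega⟩ rfl rfl]
    have h11 : A ⟨1, by omega⟩ ⟨1, by omega⟩
        ≤ 1 - (c ⟨0, by omega⟩ + c ⟨1, by omega⟩) * (1 - ε/2) := by
      rw [hA, Matrix.sub_apply, Matrix.one_apply_eq]
      have := entry_11_ge hN hM hε0.le hε1.le c hc
        (⟨1, by omega⟩ : Fin N) rfl ⟨0, by omega⟩ ⟨1, by omega⟩ rfl rfl
      linarith
    set s := c ⟨0, by omega⟩ + c ⟨1, by omega⟩ with hs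
    have hs0 : 0 ≤ s := add_nonneg (hc _) (hc _)
    by_cases hcase : s ≤ 2
    · calc 1 - ε ≤ 1 - s * (ε/2) := by nlinarith
        _ = A ⟨0, by omega⟩ ⟨0, by omega⟩ := h00.symm
        _ ≤ |A ⟨0, by omega⟩ ⟨0, by omega⟩| := le_abs_self _
        _ ≤ opNorm A := abs_entry_le_opNorm A _ _
    · calc 1 - ε ≤ -(A ⟨1, by omega⟩ ⟨1, by omega⟩) := by nlinarith
        _ ≤ |A ⟨1, by omega⟩ ⟨1, by omega⟩| := neg_le_abs _
        _ ≤ opNorm A := abs_entry_le_opNorm A _ _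
  exact le_antisymm (csInf_le ⟨1-ε, hlb⟩ hmem) (le_csInf ⟨1-ε, hmem⟩ hlb)
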